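/- arXiv:2504.09931 — 2 statements merged into one kernel-verified Lean document; each statement's English description precedes it below -/
import Mathlib

section
/- Let p ≥ 2 and let f, g be p-integrable vector fields on a measure space. Then ‖|g|^{p−2} g − |f|^{p−2} f‖_{p'} ≤ (p − 1) · 2^{(p−2)/p} · (‖f‖_p^p + ‖g‖_p^p)^{(p−2)/p} · ‖g − f‖_p. -/
/-!
For `Φ(a) = |a|^{p-2} a` and `|a| ≤ |b|`, the splitting
`Φ(b) - Φ(a) = |b|^{p-2} (b - a) + (|b|^{p-2} - |a|^{p-2}) a` together with a Bernoulli-type bound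
on the second term gives `|Φ(b) - Φ(a)| ≤ (p - 1) max(|a|, |b|)^{p-2} |b - a|`. Raised to the power
`p' = p / (p - 1)`, the right side is `(p - 1)^{p'} (|f|^p + |g|^p)^θ (|g - f|^p)^{1-θ}` with
`θ = (p - 2) / (p - 1)`, and Hölder's inequality with weights `θ, 1 - θ` (degenerate but still
valid at `p = 2`) integrates it.
-/

open MeasureTheory

lemma rpow_sub_rpow_mul_le {α s t : ℝ} (hα : 0 ≤ α) (ht : 0 ≤ t) (hts : t ≤ s) :
    (s ^ α - t ^ α) * t ≤ α * s ^ α * (s - t) := by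
  rcases ht.eq_or_lt with rfl | ht
  · simp only [mul_zero, sub_zero]
    positivity
  have hs : 0 < s := ht.trans_le hts
  rcases le_total 1 α with hα1 | hα1
  · have h := one_add_mul_self_le_rpow_one_add (s := t / s - 1) (by
      have := div_nonneg ht.le hs.le; linarith) hα1
    rw [add_sub_cancel, Real.div_rpow ht.le hs.le, le_div_iff₀ (by positivity)] at h
    have h' : (s ^ α - t ^ α) * s ≤ α * s ^ α * (s - t) := by
      have : (1 + α * (t / s - 1)) * s ^ α * s = s ^ α * s + α * s ^ α * (t - s) := by
        field_simp
      nlinarith [mul_le_mul_of_nonneg_right h hs.le]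
    calc (s ^ α - t ^ α) * t ≤ (s ^ α - t ^ α) * s := by
          gcongr
          exact sub_nonneg.2 (Real.rpow_le_rpow ht.le hts hα)
      _ ≤ α * s ^ α * (s - t) := h'
  · have h := rpow_one_add_le_one_add_mul_self (s := s / t - 1) (by
      have := div_nonneg hs.le ht.le; linarith) hα hα1
    rw [add_sub_cancel, Real.div_rpow hs.le ht.le, div_le_iff₀ (by positivity)] at h
    calc (s ^ α - t ^ α) * t ≤ α * t ^ α * (s - t) := by
          have : (1 + α * (s / t - 1)) * t ^ α * t = t ^ α * t + α * t ^ α * (s - t) := by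
            field_simp
          nlinarith [mul_le_mul_of_nonneg_right h ht.le]
      _ ≤ α * s ^ α * (s - t) := by gcongr

section NormedSpace

variable {E : Type*} [NormedAddCommGroup E] [NormedSpace ℝ E] {α : ℝ}

lemma norm_rpow_smul_sub_rpow_smul_le_of_norm_le (hα : 0 ≤ α) {a b : E} (hab : ‖a‖ ≤ ‖b‖) :
    ‖‖b‖ ^ α • b - ‖a‖ ^ α • a‖ ≤ (α + 1) * ‖b‖ ^ α * ‖b - a‖ := by
  have hmono : ‖a‖ ^ α ≤ ‖b‖ ^ α := Real.rpow_le_rpow (norm_nonneg a) hab hα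
  have hsplit : ‖b‖ ^ α • b - ‖a‖ ^ α • a = ‖b‖ ^ α • (b - a) + (‖b‖ ^ α - ‖a‖ ^ α) • a := by
    rw [smul_sub, sub_smul]; abel
  calc ‖‖b‖ ^ α • b - ‖a‖ ^ α • a‖
      ≤ ‖b‖ ^ α * ‖b - a‖ + (‖b‖ ^ α - ‖a‖ ^ α) * ‖a‖ := by
        rw [hsplit]
        refine (norm_add_le _ _).trans_eq ?_
        rw [norm_smul, norm_smul, Real.norm_of_nonneg (by positivity),
          Real.norm_of_nonneg (sub_nonneg.2 hmono)]
    _ ≤ ‖b‖ ^ α * ‖b - a‖ + α * ‖b‖ ^ α * ‖b - a‖ := by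
        refine add_le_add_right ((rpow_sub_rpow_mul_le hα (norm_nonneg a) hab).trans ?_) _
        gcongr
        exact norm_sub_norm_le b a
    _ = (α + 1) * ‖b‖ ^ α * ‖b - a‖ := by ring

lemma norm_rpow_smul_sub_rpow_smul_le (hα : 0 ≤ α) (a b : E) :
    ‖‖b‖ ^ α • b - ‖a‖ ^ α • a‖ ≤ (α + 1) * max ‖a‖ ‖b‖ ^ α * ‖b - a‖ := by
  rcases le_total ‖a‖ ‖b‖ with hab | hba
  · rw [max_eq_right hab]
    exact norm_rpow_smul_sub_rpow_smul_le_of_norm_le hα hab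
  · rw [max_eq_left hba, norm_sub_rev, norm_sub_rev b]
    exact norm_rpow_smul_sub_rpow_smul_le_of_norm_le hα hba

lemma norm_rpow_smul_sub_rpow_smul_rpow_le {p : ℝ} (hp : 2 ≤ p) (a b : E) :
    ‖‖b‖ ^ (p - 2) • b - ‖a‖ ^ (p - 2) • a‖ ^ (p / (p - 1))
      ≤ (p - 1) ^ (p / (p - 1))
        * ((‖a‖ ^ p + ‖b‖ ^ p) ^ ((p - 2) / (p - 1)) * (‖b - a‖ ^ p) ^ (1 / (p - 1))) := by
  have hp1 : 0 < p - 1 := by linarith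
  have hM : max ‖a‖ ‖b‖ ^ p ≤ ‖a‖ ^ p + ‖b‖ ^ p := by
    rw [Real.rpow_max (norm_nonneg a) (norm_nonneg b) (by linarith)]
    exact max_le_add_of_nonneg (by positivity) (by positivity)
  have hΦ := norm_rpow_smul_sub_rpow_smul_le (sub_nonneg.2 hp) a b
  rw [show p - 2 + 1 = p - 1 by ring] at hΦ
  calc ‖‖b‖ ^ (p - 2) • b - ‖a‖ ^ (p - 2) • a‖ ^ (p / (p - 1))
      ≤ ((p - 1) * max ‖a‖ ‖b‖ ^ (p - 2) * ‖b - a‖) ^ (p / (p - 1)) := by gcongr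
    _ = (p - 1) ^ (p / (p - 1))
        * ((max ‖a‖ ‖b‖ ^ p) ^ ((p - 2) / (p - 1)) * (‖b - a‖ ^ p) ^ (1 / (p - 1))) := by
      rw [Real.mul_rpow (by positivity) (norm_nonneg _), Real.mul_rpow hp1.le (by positivity),
        ← Real.rpow_mul (by positivity), ← Real.rpow_mul (by positivity),
        ← Real.rpow_mul (norm_nonneg _), mul_assoc]
      rw [mul_div_assoc', mul_comm (p - 2), mul_div_assoc, mul_one_div]
    _ ≤ _ := by gcongr

end NormedSpace

namespace MeasureTheory

section Holder

variable {Ω : Type*} [MeasurableSpace Ω] {μ : Measure Ω} {u v : Ω → ℝ} {a b : ℝ}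

lemma Integrable.rpow_mul_rpow (hu : Integrable u μ) (hv : Integrable v μ)
    (hu0 : 0 ≤ᵐ[μ] u) (hv0 : 0 ≤ᵐ[μ] v) (ha : 0 ≤ a) (hb : 0 ≤ b) (hab : a + b = 1) :
    Integrable (fun x ↦ u x ^ a * v x ^ b) μ := by
  refine ((hu.const_mul a).add (hv.const_mul b)).mono'
    ((hu.aemeasurable.pow_const a).mul (hv.aemeasurable.pow_const b)).aestronglyMeasurable ?_
  filter_upwards [hu0, hv0] with x hux hvx
  rw [Real.norm_of_nonneg (mul_nonneg (Real.rpow_nonneg hux a) (Real.rpow_nonneg hvx b))]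
  exact Real.geom_mean_le_arith_mean2_weighted ha hb hux hvx hab

lemma integral_rpow_mul_rpow_le (hu : Integrable u μ) (hv : Integrable v μ) (hu0 : 0 ≤ᵐ[μ] u)
    (hv0 : 0 ≤ᵐ[μ] v) (ha : 0 ≤ a) (hb : 0 ≤ b) (hab : a + b = 1) :
    ∫ x, u x ^ a * v x ^ b ∂μ ≤ (∫ x, u x ∂μ) ^ a * (∫ x, v x ∂μ) ^ b := by
  have hint := ENNReal.lintegral_mul_norm_pow_le hu.aemeasurable.ennreal_ofReal
    hv.aemeasurable.ennreal_ofReal ha hb hab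
  have hofReal : (fun x ↦ ENNReal.ofReal (u x ^ a * v x ^ b))
      =ᵐ[μ] fun x ↦ ENNReal.ofReal (u x) ^ a * ENNReal.ofReal (v x) ^ b := by
    filter_upwards [hu0, hv0] with x hux hvx
    rw [ENNReal.ofReal_mul (Real.rpow_nonneg hux a), ENNReal.ofReal_rpow_of_nonneg hux ha,
      ENNReal.ofReal_rpow_of_nonneg hvx hb]
  rw [integral_eq_lintegral_of_nonneg_ae (by
    filter_upwards [hu0, hv0] with x hux hvx
    exact mul_nonneg (Real.rpow_nonneg hux a) (Real.rpow_nonneg hvx b))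
    (hu.rpow_mul_rpow hv hu0 hv0 ha hb hab).aestronglyMeasurable, lintegral_congr_ae hofReal]
  have hu' := integral_nonneg_of_ae hu0
  have hv' := integral_nonneg_of_ae hv0
  refine ENNReal.toReal_le_of_le_ofReal
    (mul_nonneg (Real.rpow_nonneg hu' a) (Real.rpow_nonneg hv' b)) (hint.trans_eq ?_)
  rw [← ofReal_integral_eq_lintegral_ofReal hu hu0, ← ofReal_integral_eq_lintegral_ofReal hv hv0,
    ENNReal.ofReal_rpow_of_nonneg hu' ha, ENNReal.ofReal_rpow_of_nonneg hv' hb,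
    ← ENNReal.ofReal_mul (Real.rpow_nonneg hu' a)]

end Holder

section Lp

variable {Ω E : Type*} [MeasurableSpace Ω] {μ : Measure Ω} [NormedAddCommGroup E] {f g : Ω → E}
  {p : ℝ}

lemma integrable_norm_rpow_of_lintegral_lt_top (hf : AEStronglyMeasurable f μ)
    (hfp : ∫⁻ x, ENNReal.ofReal (‖f x‖ ^ p) ∂μ < ⊤) : Integrable (fun x ↦ ‖f x‖ ^ p) μ :=
  ⟨hf.norm.aemeasurable.pow_const p |>.aestronglyMeasurable,
    (hasFiniteIntegral_iff_ofReal (ae_of_all _ fun _ ↦ by positivity)).2 hfp⟩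

lemma Integrable.norm_sub_rpow (hp : 0 < p) (hf : AEStronglyMeasurable f μ)
    (hg : AEStronglyMeasurable g μ) (hfp : Integrable (fun x ↦ ‖f x‖ ^ p) μ)
    (hgp : Integrable (fun x ↦ ‖g x‖ ^ p) μ) : Integrable (fun x ↦ ‖g x - f x‖ ^ p) μ := by
  have hp' : ENNReal.ofReal p ≠ 0 := ENNReal.ofReal_ne_zero_iff.2 hp
  have hLp {h : Ω → E} (hh : AEStronglyMeasurable h μ) :
      Integrable (fun x ↦ ‖h x‖ ^ p) μ ↔ MemLp h (ENNReal.ofReal p) μ := by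
    simpa [ENNReal.toReal_ofReal hp.le] using integrable_norm_rpow_iff hh hp' ENNReal.ofReal_ne_top
  exact (hLp (hg.sub hf)).2 (((hLp hg).1 hgp).sub ((hLp hf).1 hfp))

end Lp

section FluxDeviation

variable {Ω E : Type*} [MeasurableSpace Ω] {μ : Measure Ω} [NormedAddCommGroup E]
  [NormedSpace ℝ E] {f g : Ω → E} {p : ℝ}

lemma integral_norm_rpow_smul_sub_rpow_smul_rpow_le (hp : 2 ≤ p)
    (hf : AEStronglyMeasurable f μ) (hg : AEStronglyMeasurable g μ)
    (hfp : Integrable (fun x ↦ ‖f x‖ ^ p) μ) (hgp : Integrable (fun x ↦ ‖g x‖ ^ p) μ) :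
    ∫ x, ‖‖g x‖ ^ (p - 2) • g x - ‖f x‖ ^ (p - 2) • f x‖ ^ (p / (p - 1)) ∂μ
      ≤ (p - 1) ^ (p / (p - 1)) * (((∫ x, ‖f x‖ ^ p ∂μ) + ∫ x, ‖g x‖ ^ p ∂μ) ^ ((p - 2) / (p - 1))
        * (∫ x, ‖g x - f x‖ ^ p ∂μ) ^ (1 / (p - 1))) := by
  have hp1 : 0 < p - 1 := by linarith
  have hw : (p - 2) / (p - 1) + 1 / (p - 1) = 1 := by field_simp; ring
  have hM := hfp.add hgp
  have hD := hfp.norm_sub_rpow (by linarith) hf hg hgp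
  have hM0 : 0 ≤ᵐ[μ] fun x ↦ ‖f x‖ ^ p + ‖g x‖ ^ p := ae_of_all _ fun _ ↦ by positivity
  have hD0 : 0 ≤ᵐ[μ] fun x ↦ ‖g x - f x‖ ^ p := ae_of_all _ fun _ ↦ by positivity
  calc _ ≤ ∫ x, (p - 1) ^ (p / (p - 1)) * ((‖f x‖ ^ p + ‖g x‖ ^ p) ^ ((p - 2) / (p - 1))
          * (‖g x - f x‖ ^ p) ^ (1 / (p - 1))) ∂μ :=
        integral_mono_of_nonneg (ae_of_all _ fun _ ↦ by positivity)
          ((hM.rpow_mul_rpow hD hM0 hD0 (by positivity) (by positivity) hw).const_mul _)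
          (ae_of_all _ fun x ↦ norm_rpow_smul_sub_rpow_smul_rpow_le hp (f x) (g x))
    _ ≤ _ := by
        rw [integral_const_mul, ← integral_add hfp hgp]
        gcongr
        exact integral_rpow_mul_rpow_le hM hD hM0 hD0 (by positivity) (by positivity) hw

end FluxDeviation

end MeasureTheory

open MeasureTheory in

theorem flux_deviation_p_ge_two_general
    (p : ℝ) (hp : 2 ≤ p)
    (N : ℕ)
    {Ω : Type*} [MeasurableSpace Ω] (μ : Measure Ω)
    (f g : Ω → EuclideanSpace ℝ (Fin N))
    (hfm : Measurable f) (hgm : Measurable g)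
    (hfp : ∫⁻ x, ENNReal.ofReal (‖f x‖ ^ p) ∂μ < ⊤)
    (hgp : ∫⁻ x, ENNReal.ofReal (‖g x‖ ^ p) ∂μ < ⊤) :
    (∫ x, ‖‖g x‖ ^ (p - 2) • g x - ‖f x‖ ^ (p - 2) • f x‖ ^ (p / (p - 1)) ∂μ)
        ^ (1 / (p / (p - 1)))
      ≤ (p - 1) * (2 : ℝ) ^ ((p - 2) / p)
          * ((∫ x, ‖f x‖ ^ p ∂μ) + ∫ x, ‖g x‖ ^ p ∂μ) ^ ((p - 2) / p)
          * (∫ x, ‖g x - f x‖ ^ p ∂μ) ^ (1 / p) := by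
  have hp1 : 0 < p - 1 := by linarith
  have hI := integral_norm_rpow_smul_sub_rpow_smul_rpow_le hp hfm.aestronglyMeasurable
    hgm.aestronglyMeasurable (integrable_norm_rpow_of_lintegral_lt_top hfm.aestronglyMeasurable hfp)
    (integrable_norm_rpow_of_lintegral_lt_top hgm.aestronglyMeasurable hgp)
  set A := (∫ x, ‖f x‖ ^ p ∂μ) + ∫ x, ‖g x‖ ^ p ∂μ
  set B := ∫ x, ‖g x - f x‖ ^ p ∂μ
  have hA : 0 ≤ A := by positivity
  have hB : 0 ≤ B := by positivity
  calc _ ≤ ((p - 1) ^ (p / (p - 1)) * (A ^ ((p - 2) / (p - 1)) * B ^ (1 / (p - 1))))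
          ^ (1 / (p / (p - 1))) := by gcongr
    _ = (p - 1) * 1 * A ^ ((p - 2) / p) * B ^ (1 / p) := by
        rw [Real.mul_rpow (by positivity) (by positivity),
          Real.mul_rpow (by positivity) (by positivity),
          ← Real.rpow_mul hp1.le, ← Real.rpow_mul hA, ← Real.rpow_mul hB]
        rw [show p / (p - 1) * (1 / (p / (p - 1))) = 1 by field_simp,
          show (p - 2) / (p - 1) * (1 / (p / (p - 1))) = (p - 2) / p by field_simp,
          show 1 / (p - 1) * (1 / (p / (p - 1))) = 1 / p by field_simp, Real.rpow_one]
        ring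
    _ ≤ _ := by gcongr; exact Real.one_le_rpow one_le_two (by positivity)

/-- Flux deviation estimate for `p ≥ 2`:
`‖ |g|^{p-2} g - |f|^{p-2} f ‖_{p'} ≤ (p-1) 2^{(p-2)/p} (‖f‖_p^p + ‖g‖_p^p)^{(p-2)/p} ‖g - f‖_p`. -/
theorem flux_deviation_p_ge_two
    (p : ℝ) (hp : 2 ≤ p)
    (N : ℕ) (hN : 1 ≤ N)
    {Ω : Type*} [MeasurableSpace Ω] (μ : Measure Ω)
    (f g : Ω → EuclideanSpace ℝ (Fin N))
    (hfm : Measurable f) (hgm : Measurable g)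
    (hfp : ∫⁻ x, ENNReal.ofReal (‖f x‖ ^ p) ∂μ < ⊤)
    (hgp : ∫⁻ x, ENNReal.ofReal (‖g x‖ ^ p) ∂μ < ⊤) :
    (∫ x, ‖‖g x‖ ^ (p - 2) • g x - ‖f x‖ ^ (p - 2) • f x‖ ^ (p / (p - 1)) ∂μ)
        ^ (1 / (p / (p - 1)))
      ≤ (p - 1) * (2 : ℝ) ^ ((p - 2) / p)
          * ((∫ x, ‖f x‖ ^ p ∂μ) + ∫ x, ‖g x‖ ^ p ∂μ) ^ ((p - 2) / p)
          * (∫ x, ‖g x - f x‖ ^ p ∂μ) ^ (1 / p) :=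
  flux_deviation_p_ge_two_general p hp N μ f g hfm hgm hfp hgp
end

section
/- Let 1 < p ≤ 2, let Λ∞ ≥ 0, and let x ↦ M(x) be a measurable family of symmetric linear maps on ℝ^N with |M(x) ξ| ≤ Λ∞ |ξ| for all ξ ∈ ℝ^N and μ-almost every x ∈ Ω. Then for any p-integrable vector fields f, g on Ω, ‖|g|^{p−2} M g − |f|^{p−2} M f‖_{p'} ≤ Λ∞ · ((3 − p)/(p − 1)) · 2^{p−1} · ‖g − f‖_p^{p−1}, where (|g|^{p−2} M g)(x) = |g(x)|^{p−2} M(x) g(x). -/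
/-!
Pointwise, `a ↦ ‖a‖ ^ (p - 2) • a` is `(p - 1)`-Hölder with constant `2`, and
`2 ≤ (3 - p) / (p - 1) * 2 ^ (p - 1)` by Bernoulli's inequality `2 ^ (2 - p) ≤ 3 - p`.
For `‖a‖ ≤ ‖b‖` and `‖b - a‖ ≤ ‖b‖` write the difference as
`‖b‖ ^ (p - 2) • (b - a) - (‖a‖ ^ (p - 2) - ‖b‖ ^ (p - 2)) • a` and bound the second term by
weighted AM-GM `‖a‖ ^ (p - 1) ‖b‖ ^ (2 - p) ≤ (p - 1) ‖a‖ + (2 - p) ‖b‖`; if `‖b‖ ≤ ‖b - a‖`,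
both `‖b‖ ^ (p - 1)` and `‖a‖ ^ (p - 1)` are at most `‖b - a‖ ^ (p - 1)`.
Composing with `M x` costs a factor `Λ`, and raising the bound to the power `p' = p / (p - 1)`
turns `‖g - f‖ ^ (p - 1)` into the integrable `‖g - f‖ ^ p`.
-/

open MeasureTheory

section PowerMap

variable {E : Type*} [NormedAddCommGroup E] [NormedSpace ℝ E] {p : ℝ}

lemma norm_rpow_sub_two_smul_self (hp : p ≠ 1) (a : E) :
    ‖‖a‖ ^ (p - 2) • a‖ = ‖a‖ ^ (p - 1) := by
  rw [norm_smul, Real.norm_of_nonneg (by positivity),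
    ← Real.rpow_add_one' (norm_nonneg a) (by contrapose! hp; linarith)]
  ring_nf

lemma Real.rpow_sub_two_mul_le_rpow_sub_one {d t : ℝ} (hp1 : p ≠ 1) (hp2 : p ≤ 2)
    (hd : 0 ≤ d) (hdt : d ≤ t) : t ^ (p - 2) * d ≤ d ^ (p - 1) := by
  rcases hd.eq_or_lt with rfl | hd
  · simpa using Real.rpow_nonneg le_rfl (p - 1)
  calc t ^ (p - 2) * d ≤ d ^ (p - 2) * d :=
        mul_le_mul_of_nonneg_right (Real.rpow_le_rpow_of_nonpos hd hdt (by linarith)) hd.le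
    _ = d ^ (p - 1) := by
        rw [← Real.rpow_add_one' hd.le (by contrapose! hp1; linarith)]
        ring_nf

lemma Real.mul_abs_rpow_sub_two_sub_le {s t : ℝ} (hp1 : 1 ≤ p) (hp2 : p ≤ 2)
    (hs : 0 ≤ s) (hst : s ≤ t) :
    s * |s ^ (p - 2) - t ^ (p - 2)| ≤ (2 - p) * (t - s) * t ^ (p - 2) := by
  rcases hs.eq_or_lt with rfl | hs
  · rw [zero_mul, sub_zero]
    exact mul_nonneg (mul_nonneg (by linarith) hst) (Real.rpow_nonneg hst _)
  have ht : 0 < t := hs.trans_le hst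
  have amgm : s ^ (p - 1) * t ^ (2 - p) ≤ (p - 1) * s + (2 - p) * t :=
    Real.geom_mean_le_arith_mean2_weighted (by linarith) (by linarith) hs.le ht.le (by ring)
  have hss : s * s ^ (p - 2) = s ^ (p - 1) := by
    rw [mul_comm, ← Real.rpow_add_one hs.ne']
    ring_nf
  have htt : t ^ (2 - p) * t ^ (p - 2) = 1 := by
    rw [← Real.rpow_add ht]
    simp
  rw [abs_of_nonneg (sub_nonneg.2 (Real.rpow_le_rpow_of_nonpos hs hst (by linarith))), mul_sub,
    hss]
  calc s ^ (p - 1) - s * t ^ (p - 2)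
      = s ^ (p - 1) * t ^ (2 - p) * t ^ (p - 2) - s * t ^ (p - 2) := by
        rw [mul_assoc, htt, mul_one]
    _ ≤ ((p - 1) * s + (2 - p) * t) * t ^ (p - 2) - s * t ^ (p - 2) := by gcongr
    _ = (2 - p) * (t - s) * t ^ (p - 2) := by ring

lemma norm_rpow_sub_two_smul_sub_le_of_norm_sub_le (hp1 : 1 < p) (hp2 : p ≤ 2) {a b : E}
    (hab : ‖a‖ ≤ ‖b‖) (hd : ‖b - a‖ ≤ ‖b‖) :
    ‖‖b‖ ^ (p - 2) • b - ‖a‖ ^ (p - 2) • a‖ ≤ (3 - p) * ‖b - a‖ ^ (p - 1) := by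
  have decomp : ‖b‖ ^ (p - 2) • b - ‖a‖ ^ (p - 2) • a
      = ‖b‖ ^ (p - 2) • (b - a) - (‖a‖ ^ (p - 2) - ‖b‖ ^ (p - 2)) • a := by
    rw [smul_sub, sub_smul]; abel
  have hscalar := Real.mul_abs_rpow_sub_two_sub_le hp1.le hp2 (norm_nonneg a) hab
  calc ‖‖b‖ ^ (p - 2) • b - ‖a‖ ^ (p - 2) • a‖
      ≤ ‖b‖ ^ (p - 2) * ‖b - a‖ + ‖a‖ * |‖a‖ ^ (p - 2) - ‖b‖ ^ (p - 2)| := by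
        rw [decomp]
        refine (norm_sub_le _ _).trans_eq ?_
        rw [norm_smul, norm_smul, Real.norm_of_nonneg (by positivity), Real.norm_eq_abs,
          mul_comm |_|]
    _ ≤ ‖b‖ ^ (p - 2) * ‖b - a‖ + (2 - p) * ‖b - a‖ * ‖b‖ ^ (p - 2) := by
        refine add_le_add_right (hscalar.trans ?_) _
        gcongr
        exact norm_sub_norm_le b a
    _ = (3 - p) * (‖b‖ ^ (p - 2) * ‖b - a‖) := by ring
    _ ≤ (3 - p) * ‖b - a‖ ^ (p - 1) := by
        gcongr
        · linarith
        · exact Real.rpow_sub_two_mul_le_rpow_sub_one hp1.ne' hp2 (norm_nonneg _) hd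

theorem norm_rpow_sub_two_smul_sub_le (hp1 : 1 < p) (hp2 : p ≤ 2) (a b : E) :
    ‖‖b‖ ^ (p - 2) • b - ‖a‖ ^ (p - 2) • a‖ ≤ 2 * ‖b - a‖ ^ (p - 1) := by
  wlog hab : ‖a‖ ≤ ‖b‖ generalizing a b
  · rw [norm_sub_rev, norm_sub_rev b]
    exact this b a (le_of_not_ge hab)
  rcases le_total ‖b - a‖ ‖b‖ with hd | hd
  · refine (norm_rpow_sub_two_smul_sub_le_of_norm_sub_le hp1 hp2 hab hd).trans ?_
    gcongr
    linarith
  · calc ‖‖b‖ ^ (p - 2) • b - ‖a‖ ^ (p - 2) • a‖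
        ≤ ‖b‖ ^ (p - 1) + ‖a‖ ^ (p - 1) := by
          refine (norm_sub_le _ _).trans_eq ?_
          rw [norm_rpow_sub_two_smul_self hp1.ne', norm_rpow_sub_two_smul_self hp1.ne']
      _ ≤ ‖b - a‖ ^ (p - 1) + ‖b - a‖ ^ (p - 1) := by
          gcongr
          exact hab.trans hd
      _ = 2 * ‖b - a‖ ^ (p - 1) := by ring

end PowerMap

lemma two_le_three_sub_div_mul_two_rpow {p : ℝ} (hp1 : 1 < p) (hp2 : p ≤ 2) :
    2 ≤ (3 - p) / (p - 1) * 2 ^ (p - 1) := by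
  have bernoulli : (2 : ℝ) ^ (2 - p) ≤ 3 - p := by
    have := rpow_one_add_le_one_add_mul_self (s := 1) (by norm_num) (p := 2 - p)
      (by linarith) (by linarith)
    norm_num at this
    linarith
  have hsplit : (2 : ℝ) ^ (p - 1) * 2 ^ (2 - p) = 2 := by
    rw [← Real.rpow_add two_pos]
    norm_num
  have hdiv : 3 - p ≤ (3 - p) / (p - 1) := by
    rw [le_div_iff₀ (by linarith)]
    nlinarith
  calc (2 : ℝ) = 2 ^ (p - 1) * 2 ^ (2 - p) := hsplit.symm
    _ ≤ 2 ^ (p - 1) * ((3 - p) / (p - 1)) := by gcongr; exact bernoulli.trans hdiv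
    _ = (3 - p) / (p - 1) * 2 ^ (p - 1) := mul_comm _ _

section Integrals

variable {Ω : Type*} [MeasurableSpace Ω] {μ : Measure Ω}

lemma memLp_ofReal_of_lintegral_norm_rpow_lt_top {E : Type*} [NormedAddCommGroup E]
    {f : Ω → E} {p : ℝ} (hf : AEStronglyMeasurable f μ) (hp : 0 < p)
    (h : ∫⁻ x, ENNReal.ofReal (‖f x‖ ^ p) ∂μ < ⊤) : MemLp f (ENNReal.ofReal p) μ := by
  rw [← integrable_norm_rpow_iff hf (by simpa using hp) ENNReal.ofReal_ne_top,
    ENNReal.toReal_ofReal hp.le]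
  exact ⟨(hf.norm.aemeasurable.pow_const p).aestronglyMeasurable,
    (hasFiniteIntegral_iff_ofReal (ae_of_all _ fun x => by positivity)).2 h⟩

theorem integral_norm_rpow_conj_le_of_norm_le {E F : Type*} [NormedAddCommGroup E]
    [NormedAddCommGroup F] {p K : ℝ} (hp : 1 < p) (hK : 0 ≤ K) {u : Ω → E} {v : Ω → F}
    (hv : Integrable (fun x => ‖v x‖ ^ p) μ) (huv : ∀ᵐ x ∂μ, ‖u x‖ ≤ K * ‖v x‖ ^ (p - 1)) :
    (∫ x, ‖u x‖ ^ (p / (p - 1)) ∂μ) ^ (1 / (p / (p - 1)))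
      ≤ K * ((∫ x, ‖v x‖ ^ p ∂μ) ^ (1 / p)) ^ (p - 1) := by
  set q := p / (p - 1)
  have hq : 0 < q := div_pos (by linarith) (by linarith)
  have hp1 : p - 1 ≠ 0 := by linarith
  have hpq : (p - 1) * q = p := mul_div_cancel₀ p hp1
  have hpointwise : ∀ᵐ x ∂μ, ‖u x‖ ^ q ≤ K ^ q * ‖v x‖ ^ p := by
    filter_upwards [huv] with x hx
    calc ‖u x‖ ^ q ≤ (K * ‖v x‖ ^ (p - 1)) ^ q := by gcongr
      _ = K ^ q * ‖v x‖ ^ p := by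
        rw [Real.mul_rpow hK (by positivity), ← Real.rpow_mul (norm_nonneg _), hpq]
  have hint : ∫ x, ‖u x‖ ^ q ∂μ ≤ K ^ q * ∫ x, ‖v x‖ ^ p ∂μ := by
    rw [← integral_const_mul]
    exact integral_mono_of_nonneg (ae_of_all _ fun x => by positivity) (hv.const_mul _)
      hpointwise
  have hI : 0 ≤ ∫ x, ‖v x‖ ^ p ∂μ := integral_nonneg fun x => by positivity
  calc (∫ x, ‖u x‖ ^ q ∂μ) ^ (1 / q) ≤ (K ^ q * ∫ x, ‖v x‖ ^ p ∂μ) ^ (1 / q) := by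
        gcongr
    _ = K * ((∫ x, ‖v x‖ ^ p ∂μ) ^ (1 / p)) ^ (p - 1) := by
        rw [Real.mul_rpow (by positivity) hI, ← Real.rpow_mul hK, mul_one_div_cancel hq.ne',
          Real.rpow_one, ← Real.rpow_mul hI, one_div_mul_eq_div, one_div_div]

end Integrals

theorem anisotropic_flux_deviation_p_le_two_general
    (p : ℝ) (hp1 : 1 < p) (hp2 : p ≤ 2)
    (N : ℕ)
    {Ω : Type*} [MeasurableSpace Ω] (μ : Measure Ω)
    (Λ : ℝ) (hΛ : 0 ≤ Λ)
    (M : Ω → (EuclideanSpace ℝ (Fin N) →ₗ[ℝ] EuclideanSpace ℝ (Fin N)))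
    (hMbound : ∀ᵐ x ∂μ, ∀ ξ : EuclideanSpace ℝ (Fin N), ‖M x ξ‖ ≤ Λ * ‖ξ‖)
    (f g : Ω → EuclideanSpace ℝ (Fin N))
    (hfm : Measurable f) (hgm : Measurable g)
    (hfp : ∫⁻ x, ENNReal.ofReal (‖f x‖ ^ p) ∂μ < ⊤)
    (hgp : ∫⁻ x, ENNReal.ofReal (‖g x‖ ^ p) ∂μ < ⊤) :
    (∫ x, ‖‖g x‖ ^ (p - 2) • M x (g x) - ‖f x‖ ^ (p - 2) • M x (f x)‖ ^ (p / (p - 1)) ∂μ)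
        ^ (1 / (p / (p - 1)))
      ≤ Λ * ((3 - p) / (p - 1)) * (2 : ℝ) ^ (p - 1)
          * ((∫ x, ‖g x - f x‖ ^ p ∂μ) ^ (1 / p)) ^ (p - 1) := by
  have hp0 : 0 < p := by linarith
  have hf := memLp_ofReal_of_lintegral_norm_rpow_lt_top hfm.aestronglyMeasurable hp0 hfp
  have hg := memLp_ofReal_of_lintegral_norm_rpow_lt_top hgm.aestronglyMeasurable hp0 hgp
  have hgf : Integrable (fun x => ‖g x - f x‖ ^ p) μ := by
    simpa [ENNReal.toReal_ofReal hp0.le] using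
      (hg.sub hf).integrable_norm_rpow (by simpa using hp0) ENNReal.ofReal_ne_top
  have hC := two_le_three_sub_div_mul_two_rpow hp1 hp2
  have hK : 0 ≤ Λ * ((3 - p) / (p - 1)) * 2 ^ (p - 1) := by
    rw [mul_assoc]; exact mul_nonneg hΛ (by linarith)
  refine integral_norm_rpow_conj_le_of_norm_le hp1 hK hgf ?_
  filter_upwards [hMbound] with x hMx
  rw [← map_smul, ← map_smul, ← map_sub]
  calc ‖M x (‖g x‖ ^ (p - 2) • g x - ‖f x‖ ^ (p - 2) • f x)‖
      ≤ Λ * (2 * ‖g x - f x‖ ^ (p - 1)) :=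
        (hMx _).trans (by gcongr; exact norm_rpow_sub_two_smul_sub_le hp1 hp2 (f x) (g x))
    _ ≤ Λ * ((3 - p) / (p - 1)) * 2 ^ (p - 1) * ‖g x - f x‖ ^ (p - 1) := by
        rw [mul_assoc Λ, ← mul_assoc Λ]
        gcongr

/-- Anisotropic flux deviation estimate for `1 < p ≤ 2`:
`‖ |g|^{p-2} M g - |f|^{p-2} M f ‖_{p'} ≤ Λ∞ ((3-p)/(p-1)) 2^{p-1} ‖g - f‖_p^{p-1}`. -/
theorem anisotropic_flux_deviation_p_le_two
    (p : ℝ) (hp1 : 1 < p) (hp2 : p ≤ 2)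
    (N : ℕ) (hN : 1 ≤ N)
    {Ω : Type*} [MeasurableSpace Ω] (μ : Measure Ω)
    (Λ : ℝ) (hΛ : 0 ≤ Λ)
    (M : Ω → (EuclideanSpace ℝ (Fin N) →ₗ[ℝ] EuclideanSpace ℝ (Fin N)))
    (hMmeas : ∀ ξ : EuclideanSpace ℝ (Fin N), Measurable fun x => M x ξ)
    (hMsymm : ∀ x : Ω, ∀ ξ η : EuclideanSpace ℝ (Fin N),
      (inner ℝ (M x ξ) η : ℝ) = inner ℝ ξ (M x η))
    (hMbound : ∀ᵐ x ∂μ, ∀ ξ : EuclideanSpace ℝ (Fin N), ‖M x ξ‖ ≤ Λ * ‖ξ‖)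
    (f g : Ω → EuclideanSpace ℝ (Fin N))
    (hfm : Measurable f) (hgm : Measurable g)
    (hfp : ∫⁻ x, ENNReal.ofReal (‖f x‖ ^ p) ∂μ < ⊤)
    (hgp : ∫⁻ x, ENNReal.ofReal (‖g x‖ ^ p) ∂μ < ⊤) :
    (∫ x, ‖‖g x‖ ^ (p - 2) • M x (g x) - ‖f x‖ ^ (p - 2) • M x (f x)‖ ^ (p / (p - 1)) ∂μ)
        ^ (1 / (p / (p - 1)))
      ≤ Λ * ((3 - p) / (p - 1)) * (2 : ℝ) ^ (p - 1)
          * ((∫ x, ‖g x - f x‖ ^ p ∂μ) ^ (1 / p)) ^ (p - 1) :=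
  anisotropic_flux_deviation_p_le_two_general p hp1 hp2 N μ Λ hΛ M hMbound f g hfm hgm hfp hgp
end
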